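/- arXiv:1112.5090 — 2 statements merged into one kernel-verified Lean document; each statement's English description precedes it below -/
import Mathlib

section
/- Let g ∈ ℚ \ {−1,0,1}, written as g = ±g_0^h with g_0 a positive rational that is not an exact power of a rational and h ≥ 1 an integer. For a prime p, let F_p be the splitting field of X^p − g over ℚ. If g < 0, h is even and p = 2, then [F_2 : ℚ] = 2 (indeed F_2 = ℚ(i)); in all other cases [F_p : ℚ] = p(p−1)/gcd(p,h). -/
open Polynomial IntermediateField

/-- The Wagstaff sum `S(h,t,m) = ∑_{n ≥ 1, m ∣ nt} μ(n)·gcd(nt,h)/(nt·φ(nt))`. -/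
noncomputable def wagstaffS (h t m : ℕ) : ℝ :=
  ∑' n : ℕ, if 0 < n ∧ m ∣ n * t then
      (ArithmeticFunction.moebius n : ℝ) * (Nat.gcd (n * t) h : ℝ) /
        (↑(n * t) * ↑(Nat.totient (n * t)))
    else 0

/-- The Artin constant `A = ∏_p (1 - 1/(p(p-1)))`. -/
noncomputable def artinConst : ℝ :=
  ∏' p : Nat.Primes, (1 - 1 / ((p : ℝ) * ((p : ℝ) - 1)))

/-- `E_1(m_2)`, depending also on the 2-parts `h_2` and `t_2`. -/
noncomputable def E1 (h2 t2 m2 : ℕ) : ℝ :=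
  if m2 ∣ t2 then 1
  else if m2 = 2 * t2 ∧ Nat.lcm 2 h2 ∣ t2 then -1/3
  else if m2 = 2 * t2 ∧ ¬ Nat.lcm 2 h2 ∣ t2 then -1
  else 0

/-- `E_2(m_2)`, depending also on the 2-part `t_2`. -/
noncomputable def E2 (t2 m2 : ℕ) : ℝ :=
  if m2 ∣ t2 then 1
  else if m2 = 2 * t2 ∧ m2 ≠ 2 then -1/3
  else if m2 = 2 * t2 ∧ m2 = 2 then -1
  else 0

/-- `[F_p : ℚ]`, where `F_p = ℚ(ζ_p, g^{1/p})` is the splitting field of `X^p - g` over `ℚ`. -/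
noncomputable def FpDeg (g : ℚ) (p : ℕ) : ℕ :=
  Module.finrank ℚ ((X ^ p - C g : ℚ[X]).SplittingField)

/-- `A(g,t) = (gcd(t,h)/t²)·∏_{p∣t, h_p∣t_p}(1+1/p)·∏_{p∤t}(1-1/[F_p:ℚ])`. -/
noncomputable def Agt (g : ℚ) (h t : ℕ) : ℝ :=
  ((Nat.gcd t h : ℝ) / (t : ℝ) ^ 2) *
    (∏ p ∈ t.primeFactors, if ordProj[p] h ∣ ordProj[p] t then 1 + 1 / (p : ℝ) else 1) *
    ∏' p : Nat.Primes, (if (p : ℕ) ∣ t then 1 else 1 - 1 / (FpDeg g (p : ℕ) : ℝ))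

/-- `Π_1 = ∏_{p ∣ d, p ∤ 2t} (-1/([F_p:ℚ]-1))`, where `d` is (the absolute value of) `d(g₀)`. -/
noncomputable def Pi1 (g : ℚ) (t d : ℕ) : ℝ :=
  ∏ p ∈ d.primeFactors, (if ¬ p ∣ 2 * t then -1 / ((FpDeg g p : ℝ) - 1) else 1)

/-- Discriminant of `ℚ(√d)` for a squarefree integer `d`: `d` if `d ≡ 1 (mod 4)`, else `4d`. -/
def sqDisc (d : ℤ) : ℤ := if d % 4 = 1 then d else 4 * d

/-- `g₀` is not an exact power of a rational number. -/
def NotExactPower (g0 : ℚ) : Prop := ∀ (r : ℚ) (k : ℕ), 2 ≤ k → g0 ≠ r ^ k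



/-- Auxiliary: in the splitting field of `X^p - g` (`g ≠ 0`, `p` prime) there is a root `α`
and a primitive `p`-th root of unity `ζ` generating the field. -/
lemma FpDeg_aux_exists (g : ℚ) (hg : g ≠ 0) (p : ℕ) (hp : p.Prime) :
    ∃ α ζ : (X ^ p - C g : ℚ[X]).SplittingField,
      α ^ p = algebraMap ℚ _ g ∧ IsPrimitiveRoot ζ p ∧
      IntermediateField.adjoin ℚ {α, ζ} = ⊤ := by
  classical
  set f : ℚ[X] := X ^ p - C g with hf
  set L := f.SplittingField with hL
  haveI : NeZero p := ⟨hp.ne_zero⟩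
  set φ := algebraMap ℚ L with hφ
  have hφg : φ g ≠ 0 := fun hh => hg (by
    have := (algebraMap ℚ L).injective (a₁ := g) (a₂ := 0); simp [hφ] at hh; exact hh)
  -- the root α
  haveI : IsSplittingField ℚ L (X ^ p - C g) := Polynomial.IsSplittingField.splittingField f
  set α : L := rootOfSplitsXPowSubC hp.pos g L with hαdef
  have hα : α ^ p = φ g := rootOfSplitsXPowSubC_pow (n := p) g L
  have hα0 : α ≠ 0 := fun hh => hφg (by rw [← hα, hh, zero_pow hp.ne_zero])
  -- second root
  have hsep : f.Separable := separable_X_pow_sub_C g (Nat.cast_ne_zero.mpr hp.ne_zero) hg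
  have hfm : (f.map φ) ≠ 0 :=
    (Polynomial.map_ne_zero_iff φ.injective).mpr ((monic_X_pow_sub_C g hp.ne_zero).ne_zero)
  have hcard : (f.map φ).roots.toFinset.card = p := by
    rw [Multiset.toFinset_card_of_nodup (nodup_roots (hsep.map (f := φ))),
      ← (show (f.map φ).Splits from SplittingField.splits f).natDegree_eq_card_roots, natDegree_map, hf, natDegree_X_pow_sub_C]
  obtain ⟨β, hβmem, hβne⟩ :=
    Finset.exists_mem_ne (by rw [hcard]; exact hp.one_lt) α
  have hβ : β ^ p = φ g := by
    have := (mem_roots hfm).mp (Multiset.mem_toFinset.mp hβmem)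
    have h2 : eval β (f.map φ) = 0 := this
    simp only [hf, Polynomial.map_sub, Polynomial.map_pow, map_X, map_C, eval_sub, eval_pow,
      eval_X, eval_C, sub_eq_zero] at h2
    exact h2
  -- the primitive root ζ
  set ζ : L := β / α with hζdef
  have hζp : ζ ^ p = 1 := by
    rw [hζdef, div_pow, hβ, hα, div_self hφg]
  have hζ1 : ζ ≠ 1 := by
    rw [hζdef, Ne, div_eq_one_iff_eq hα0]; exact hβne
  have hord : orderOf ζ = p := by
    rcases (Nat.Prime.eq_one_or_self_of_dvd hp _ (orderOf_dvd_of_pow_eq_one hζp)) with h1 | h1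
    · exact absurd (orderOf_eq_one_iff.mp h1) hζ1
    · exact h1
  have hζ : IsPrimitiveRoot ζ p := hord ▸ IsPrimitiveRoot.orderOf ζ
  refine ⟨α, ζ, hα, hζ, ?_⟩
  rw [eq_top_iff]
  have h1 : IntermediateField.adjoin ℚ (f.rootSet L) = ⊤ := by
    rw [eq_top_iff]
    intro x _
    exact IntermediateField.algebra_adjoin_le_adjoin ℚ _
      (by rw [Polynomial.IsSplittingField.adjoin_rootSet L f]; trivial)
  refine le_trans (le_of_eq h1.symm) (IntermediateField.adjoin_le_iff.mpr ?_)
  intro x hx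
  have hxr : x ^ p = φ g := by
    have := (Polynomial.mem_rootSet.mp hx).2
    simp only [hf, map_sub, map_pow, aeval_X, aeval_C, sub_eq_zero] at this
    exact this
  have hdiv : (x / α) ^ p = 1 := by rw [div_pow, hxr, hα, div_self hφg]
  obtain ⟨i, -, hi⟩ := hζ.eq_pow_of_pow_eq_one hdiv
  have hxe : x = ζ ^ i * α := by
    rw [hi, div_mul_cancel₀ _ hα0]
  rw [hxe]
  exact mul_mem (pow_mem (subset_adjoin ℚ _ (by simp)) i) (subset_adjoin ℚ _ (by simp))

lemma FpDeg_of_pow (g r : ℚ) (hr : r ≠ 0) (p : ℕ) (hp : p.Prime) (hrg : r ^ p = g) :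
    FpDeg g p = p - 1 := by
  classical
  have hg : g ≠ 0 := hrg ▸ pow_ne_zero _ hr
  haveI : NeZero p := ⟨hp.ne_zero⟩
  obtain ⟨α, ζ, hα, hζ, htop⟩ := FpDeg_aux_exists g hg p hp
  have hφg : algebraMap ℚ (X ^ p - C g : ℚ[X]).SplittingField g ≠ 0 :=
    fun hh => hg ((algebraMap ℚ _).injective (by rw [hh, map_zero]))
  have hφr : algebraMap ℚ (X ^ p - C g : ℚ[X]).SplittingField r ≠ 0 :=
    fun hh => hr ((algebraMap ℚ _).injective (by rw [hh, map_zero]))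
  have hζtop : ℚ⟮ζ⟯ = ⊤ := by
    rw [eq_top_iff, ← htop, IntermediateField.adjoin_le_iff]
    intro x hx
    simp only [Set.mem_insert_iff, Set.mem_singleton_iff] at hx
    rcases hx with rfl | rfl
    · have hdiv : (x / algebraMap ℚ _ r) ^ p = 1 := by
        rw [div_pow, hα, ← map_pow, hrg, div_self hφg]
      obtain ⟨i, -, hi⟩ := hζ.eq_pow_of_pow_eq_one hdiv
      have hxe : x = ζ ^ i * algebraMap ℚ _ r := by rw [hi, div_mul_cancel₀ _ hφr]
      rw [hxe]
      exact mul_mem (pow_mem (subset_adjoin ℚ _ (by simp)) i)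
        (IntermediateField.algebraMap_mem _ r)
    · exact subset_adjoin ℚ _ (by simp)
  show Module.finrank ℚ (X ^ p - C g : ℚ[X]).SplittingField = p - 1
  rw [← IntermediateField.finrank_top', ← hζtop,
    IntermediateField.adjoin.finrank (.of_finite ℚ ζ),
    ← cyclotomic_eq_minpoly_rat hζ hp.pos, natDegree_cyclotomic, Nat.totient_prime hp]

set_option maxHeartbeats 2000000 in
lemma FpDeg_of_irr (g : ℚ) (p : ℕ) (hp : p.Prime) (hirr : ∀ b : ℚ, b ^ p ≠ g) :
    FpDeg g p = p * (p - 1) := by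
  classical
  have hg : g ≠ 0 := fun hh => hirr 0 (by rw [hh, zero_pow hp.ne_zero])
  have H : Irreducible (X ^ p - C g : ℚ[X]) := X_pow_sub_C_irreducible_of_prime hp hirr
  haveI : NeZero p := ⟨hp.ne_zero⟩
  obtain ⟨α, ζ, hα, hζ, htop⟩ := FpDeg_aux_exists g hg p hp
  have hmin : minpoly ℚ α = X ^ p - C g :=
    (minpoly.eq_of_irreducible_of_monic H
      (by simp only [map_sub, map_pow, aeval_X, aeval_C, hα, sub_self])
      (monic_X_pow_sub_C g hp.ne_zero)).symm
  have hK1 : Module.finrank ℚ ℚ⟮α⟯ = p := by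
    rw [IntermediateField.adjoin.finrank (.of_finite ℚ α), hmin, natDegree_X_pow_sub_C]
  have hKζ : Module.finrank ℚ ℚ⟮ζ⟯ = p - 1 := by
    rw [IntermediateField.adjoin.finrank (.of_finite ℚ ζ),
      ← cyclotomic_eq_minpoly_rat hζ hp.pos, natDegree_cyclotomic, Nat.totient_prime hp]
  have hd1 : p ∣ Module.finrank ℚ (X ^ p - C g : ℚ[X]).SplittingField :=
    ⟨Module.finrank ℚ⟮α⟯ (X ^ p - C g : ℚ[X]).SplittingField,
      by rw [← Module.finrank_mul_finrank ℚ ℚ⟮α⟯ (X ^ p - C g : ℚ[X]).SplittingField, hK1]⟩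
  have hd2 : (p - 1) ∣ Module.finrank ℚ (X ^ p - C g : ℚ[X]).SplittingField :=
    ⟨Module.finrank ℚ⟮ζ⟯ (X ^ p - C g : ℚ[X]).SplittingField,
      by rw [← Module.finrank_mul_finrank ℚ ℚ⟮ζ⟯ (X ^ p - C g : ℚ[X]).SplittingField, hKζ]⟩
  have hco : Nat.Coprime p (p - 1) :=
    (Nat.coprime_self_sub_right hp.one_lt.le).mpr (Nat.coprime_one_right p)
  have hdvd : p * (p - 1) ∣ Module.finrank ℚ (X ^ p - C g : ℚ[X]).SplittingField :=
    hco.mul_dvd_of_dvd_of_dvd hd1 hd2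
  have htop2 : IntermediateField.adjoin ℚ⟮α⟯
      ({ζ} : Set (X ^ p - C g : ℚ[X]).SplittingField) = ⊤ := by
    apply IntermediateField.restrictScalars_injective ℚ
    rw [IntermediateField.restrictScalars_top]
    exact (IntermediateField.adjoin_simple_adjoin_simple ℚ α ζ).trans htop
  have hup : Module.finrank ℚ⟮α⟯ (X ^ p - C g : ℚ[X]).SplittingField ≤ p - 1 := by
    have e1 : Module.finrank ℚ⟮α⟯ (X ^ p - C g : ℚ[X]).SplittingField =
        Module.finrank ℚ⟮α⟯ (IntermediateField.adjoin ℚ⟮α⟯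
          ({ζ} : Set (X ^ p - C g : ℚ[X]).SplittingField)) := by
      rw [htop2, IntermediateField.finrank_top']
    have e2 : Module.finrank ℚ⟮α⟯ (IntermediateField.adjoin ℚ⟮α⟯
          ({ζ} : Set (X ^ p - C g : ℚ[X]).SplittingField)) =
        (minpoly ℚ⟮α⟯ ζ).natDegree := IntermediateField.adjoin.finrank (.of_finite _ ζ)
    have e3 : minpoly ℚ⟮α⟯ ζ ∣ cyclotomic p ℚ⟮α⟯ := by
      apply minpoly.dvd
      rw [aeval_def, ← eval_map, map_cyclotomic]
      exact hζ.isRoot_cyclotomic hp.pos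
    have e4 : (minpoly ℚ⟮α⟯ ζ).natDegree ≤ (cyclotomic p ℚ⟮α⟯).natDegree :=
      natDegree_le_of_dvd e3 (cyclotomic_ne_zero p _)
    rw [e1, e2]
    rw [natDegree_cyclotomic, Nat.totient_prime hp] at e4
    exact e4
  have hle : Module.finrank ℚ (X ^ p - C g : ℚ[X]).SplittingField ≤ p * (p - 1) := by
    have h5 := Module.finrank_mul_finrank ℚ ℚ⟮α⟯ (X ^ p - C g : ℚ[X]).SplittingField
    have h6 : Module.finrank ℚ ℚ⟮α⟯ * Module.finrank ℚ⟮α⟯ (X ^ p - C g : ℚ[X]).SplittingField ≤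
        Module.finrank ℚ ℚ⟮α⟯ * (p - 1) := Nat.mul_le_mul_left _ hup
    rw [h5, hK1] at h6
    exact h6
  exact le_antisymm hle (Nat.le_of_dvd Module.finrank_pos hdvd)

/-- If `g0` is not an exact power and `p ∤ h`, then `g0 ^ h` is not a `p`-th power. -/
lemma not_pow_of_notExactPower (g0 : ℚ) (hg0 : g0 ≠ 0) (hnp : NotExactPower g0)
    (h p : ℕ) (hp : p.Prime) (hph : ¬ p ∣ h) : ∀ b : ℚ, b ^ p ≠ g0 ^ h := by
  intro b hb
  have hbne : b ≠ 0 := by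
    intro hb0
    rw [hb0, zero_pow hp.ne_zero] at hb
    exact pow_ne_zero h hg0 hb.symm
  have hco : IsCoprime (p : ℤ) (h : ℤ) := by
    rw [Int.isCoprime_iff_gcd_eq_one, Int.gcd_natCast_natCast]
    exact hp.coprime_iff_not_dvd.mpr hph
  obtain ⟨u, v, huv⟩ := hco
  have key : g0 = (g0 ^ u * b ^ v) ^ (p : ℤ) := by
    calc g0 = g0 ^ (u * (p : ℤ) + v * (h : ℤ)) := by rw [huv, zpow_one]
      _ = (g0 ^ u) ^ (p : ℤ) * (g0 ^ (h : ℤ)) ^ v := by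
          rw [zpow_add₀ hg0, zpow_mul, mul_comm v ((h : ℕ) : ℤ), zpow_mul]
      _ = (g0 ^ u) ^ (p : ℤ) * (b ^ v) ^ (p : ℤ) := by
          rw [zpow_natCast g0 h, ← hb, ← zpow_natCast b p]
          congr 1
          rw [← zpow_mul, ← zpow_mul, mul_comm]
      _ = (g0 ^ u * b ^ v) ^ (p : ℤ) := (mul_zpow _ _ _).symm
  rw [zpow_natCast] at key
  exact hnp (g0 ^ u * b ^ v) p hp.two_le key

/-- Degree of `F_p = ℚ(ζ_p, g^{1/p})`, the splitting field of `X^p - g` over `ℚ`: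
it is `2` if `g < 0`, `h` is even and `p = 2`; otherwise it is `p(p-1)/gcd(p,h)`. -/
theorem FpDeg_eq (g : ℚ) (hg : g ≠ -1 ∧ g ≠ 0 ∧ g ≠ 1)
    (g0 : ℚ) (h : ℕ) (hg0pos : 0 < g0) (hh : 1 ≤ h) (hnp : NotExactPower g0)
    (hrep : g = g0 ^ h ∨ g = -(g0 ^ h))
    (p : ℕ) (hp : p.Prime) :
    (g < 0 ∧ 2 ∣ h ∧ p = 2 → FpDeg g p = 2) ∧
    (¬ (g < 0 ∧ 2 ∣ h ∧ p = 2) → FpDeg g p = p * (p - 1) / Nat.gcd p h) := by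
  have hg0ne : g0 ≠ 0 := ne_of_gt hg0pos
  have hg0h : (0:ℚ) < g0 ^ h := pow_pos hg0pos h
  constructor
  · rintro ⟨hneg, -, rfl⟩
    have hirr : ∀ b : ℚ, b ^ 2 ≠ g := fun b hb =>
      absurd (hb ▸ sq_nonneg b) (not_le.mpr hneg)
    rw [FpDeg_of_irr g 2 Nat.prime_two hirr]
  · intro hnot
    by_cases hph : p ∣ h
    · -- g is a p-th power
      obtain ⟨r, hr, hrp⟩ : ∃ r : ℚ, r ≠ 0 ∧ r ^ p = g := by
        obtain ⟨k, rfl⟩ := hph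
        rcases hrep with rfl | rfl
        · exact ⟨g0 ^ k, pow_ne_zero k hg0ne, by rw [← pow_mul, mul_comm]⟩
        · rcases hp.eq_two_or_odd' with rfl | hodd
          · exact absurd ⟨by linarith, ⟨k, rfl⟩, rfl⟩ hnot
          · exact ⟨-(g0 ^ k), neg_ne_zero.mpr (pow_ne_zero k hg0ne),
              by rw [hodd.neg_pow, ← pow_mul, mul_comm]⟩
      rw [FpDeg_of_pow g r hr p hp hrp, Nat.gcd_eq_left hph,
        Nat.mul_div_cancel_left _ hp.pos]
    · -- X^p - g irreducible
      have hirr : ∀ b : ℚ, b ^ p ≠ g := by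
        rcases hrep with rfl | rfl
        · exact not_pow_of_notExactPower g0 hg0ne hnp h p hp hph
        · intro b hb
          rcases hp.eq_two_or_odd' with rfl | hodd
          · exact absurd (hb ▸ sq_nonneg b) (not_le.mpr (by linarith))
          · exact not_pow_of_notExactPower g0 hg0ne hnp h p hp hph (-b)
              (by rw [hodd.neg_pow, hb, neg_neg])
      rw [FpDeg_of_irr g p hp hirr, (hp.coprime_iff_not_dvd.mpr hph).gcd_eq_one,
        Nat.div_one]
end

section
/- Let g ∈ ℚ \ {−1,0,1} with g = ±g_0^h as below, and let t be a positive integer. Then A(g,t) = 0 if and only if g > 0, h is even and t is odd. -/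
open Polynomial

section Aux

open IntermediateField

private lemma tprod_eq_zero'' {ι : Type*} (f : ι → ℝ) (b : ι) (hb : f b = 0) :
    ∏' i, f i = 0 := by
  have h : HasProd f 0 := by
    rw [HasProd]
    apply (tendsto_const_nhds (x := (0:ℝ))).congr'
    filter_upwards [Filter.eventually_ge_atTop {b}] with s hs
    exact (Finset.prod_eq_zero (Finset.singleton_subset_iff.mp hs) hb).symm
  exact h.tprod_eq

private lemma notpow_aux {g0 : ℚ} (hg0 : 0 < g0) (hnp : NotExactPower g0)
    {k h : ℕ} (hk : 2 ≤ k) (hco : Nat.Coprime k h) (c : ℚ) : c ^ k ≠ g0 ^ h := by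
  intro hc
  have hg0ne : g0 ≠ 0 := ne_of_gt hg0
  have hcne : c ≠ 0 := by
    intro h0
    rw [h0, zero_pow (by omega)] at hc
    exact (pow_ne_zero h hg0ne) hc.symm
  have hcop : IsCoprime (k : ℤ) (h : ℤ) := by
    rw [Int.isCoprime_iff_gcd_eq_one, Int.gcd_natCast_natCast]
    exact hco
  obtain ⟨u, v, huv⟩ := hcop
  have hck : c ^ (k : ℤ) = g0 ^ (h : ℤ) := by
    rw [zpow_natCast, zpow_natCast]; exact hc
  have key : (g0 ^ u * c ^ v) ^ (k : ℤ) = g0 := by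
    have h1 : (g0 ^ u * c ^ v) ^ (k : ℤ) = g0 ^ (u * (k:ℤ)) * c ^ (v * (k:ℤ)) := by
      rw [mul_zpow, ← zpow_mul, ← zpow_mul]
    have h2 : c ^ (v * (k:ℤ)) = g0 ^ (v * (h:ℤ)) := by
      rw [mul_comm v (k:ℤ), zpow_mul, hck, ← zpow_mul, mul_comm (h:ℤ) v]
    rw [h1, h2, ← zpow_add₀ hg0ne, huv, zpow_one]
  refine hnp (g0 ^ u * c ^ v) k hk ?_
  rw [← zpow_natCast (g0 ^ u * c ^ v) k]
  exact key.symm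

private lemma FpDeg_pos (g : ℚ) (p : ℕ) : 0 < FpDeg g p :=
  Module.finrank_pos

private lemma dvd_FpDeg_of_irreducible {g : ℚ} {p : ℕ} (hp : p ≠ 0)
    (hirr : Irreducible (X ^ p - C g : ℚ[X])) : p ∣ FpDeg g p := by
  set q : ℚ[X] := X ^ p - C g with hq
  set L := q.SplittingField with hL
  have hmonic : q.Monic := monic_X_pow_sub_C g hp
  have hdeg : q.degree ≠ 0 := by
    rw [hq, degree_X_pow_sub_C (Nat.pos_of_ne_zero hp)]
    exact_mod_cast hp
  obtain ⟨α, hα⟩ := (SplittingField.splits q).exists_eval_eq_zero (by rwa [degree_map])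
  have hαint : IsIntegral ℚ α := IsIntegral.of_finite ℚ α
  have haev : (Polynomial.aeval α) q = 0 := by rwa [aeval_def, eval₂_eq_eval_map]
  have hmin : minpoly ℚ α = q := (minpoly.eq_of_irreducible_of_monic hirr haev hmonic).symm
  have h1 : Module.finrank ℚ ℚ⟮α⟯ = p := by
    rw [IntermediateField.adjoin.finrank hαint, hmin, hq, natDegree_X_pow_sub_C]
  have h2 : FpDeg g p = Module.finrank ℚ L := rfl
  refine ⟨Module.finrank ℚ⟮α⟯ L, ?_⟩
  rw [h2, ← h1]
  exact (Module.finrank_mul_finrank ℚ ℚ⟮α⟯ L).symm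

private lemma sub_one_dvd_FpDeg {g : ℚ} (hg : g ≠ 0) {p : ℕ} (hp : p.Prime) :
    (p - 1) ∣ FpDeg g p := by
  set q : ℚ[X] := X ^ p - C g with hq
  set L := q.SplittingField with hL
  have hp0 : (p : ℚ) ≠ 0 := Nat.cast_ne_zero.mpr hp.pos.ne'
  have hsep : q.Separable := separable_X_pow_sub_C g hp0 hg
  have hcard : Multiset.card (q.map (algebraMap ℚ L)).roots = p := by
    refine (splits_iff_card_roots.mp (SplittingField.splits q)).trans ?_
    rw [natDegree_map, hq, natDegree_X_pow_sub_C]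
  have hnodup : (q.map (algebraMap ℚ L)).roots.Nodup := nodup_roots hsep.map
  have hroot : ∀ x ∈ (q.map (algebraMap ℚ L)).roots, x ^ p = algebraMap ℚ L g := by
    intro x hx
    have := isRoot_of_mem_roots hx
    simp only [IsRoot.def, hq, Polynomial.map_sub, Polynomial.map_pow, map_X, map_C,
      eval_sub, eval_pow, eval_X, eval_C, sub_eq_zero] at this
    exact this
  have h2le : 2 ≤ Multiset.card (q.map (algebraMap ℚ L)).roots := hcard ▸ hp.two_le
  obtain ⟨α, hαmem⟩ := Multiset.card_pos_iff_exists_mem.mp (lt_of_lt_of_le (by norm_num) h2le)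
  classical
  have herase : 0 < Multiset.card ((q.map (algebraMap ℚ L)).roots.erase α) := by
    rw [Multiset.card_erase_of_mem hαmem, hcard, Nat.pred_eq_sub_one]
    have := hp.two_le
    omega
  obtain ⟨β, hβmem⟩ := Multiset.card_pos_iff_exists_mem.mp herase
  have hβ := (hnodup.mem_erase_iff.mp hβmem)
  have hαroot := hroot α hαmem
  have hβroot := hroot β hβ.2
  have hgL : algebraMap ℚ L g ≠ 0 := by
    simp [hg]
  have hαne : α ≠ 0 := by
    intro h0
    rw [h0, zero_pow hp.pos.ne'] at hαroot
    exact hgL hαroot.symm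
  set ζ : L := β / α with hζ
  have hζp : ζ ^ p = 1 := by
    rw [hζ, div_pow, hαroot, hβroot, div_self hgL]
  have hζne : ζ ≠ 1 := by
    intro h1
    rw [hζ, div_eq_one_iff_eq hαne] at h1
    exact hβ.1 h1
  have horder : orderOf ζ = p := by
    have hdvd : orderOf ζ ∣ p := orderOf_dvd_of_pow_eq_one hζp
    rcases hp.eq_one_or_self_of_dvd _ hdvd with h1 | h1
    · exact absurd (orderOf_eq_one_iff.mp h1) hζne
    · exact h1
  have hprim : IsPrimitiveRoot ζ p := horder ▸ IsPrimitiveRoot.orderOf ζ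
  have hζint : IsIntegral ℚ ζ := IsIntegral.of_finite ℚ ζ
  have h1 : Module.finrank ℚ ℚ⟮ζ⟯ = p - 1 := by
    rw [IntermediateField.adjoin.finrank hζint, ← cyclotomic_eq_minpoly_rat hprim hp.pos,
      natDegree_cyclotomic, Nat.totient_prime hp]
  have h2 : FpDeg g p = Module.finrank ℚ L := rfl
  refine ⟨Module.finrank ℚ⟮ζ⟯ L, ?_⟩
  rw [h2, ← h1]
  exact (Module.finrank_mul_finrank ℚ ℚ⟮ζ⟯ L).symm

private lemma FpDeg_eq_one_of_sq {g b : ℚ} (hb : b ^ 2 = g) : FpDeg g 2 = 1 := by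
  have hCg : (C g : ℚ[X]) = C b ^ 2 := by rw [← hb, map_pow]
  have hfac : (X ^ 2 - C g : ℚ[X]) = (X - C b) * (X - C (-b)) := by
    rw [hCg, map_neg]
    ring
  have hsplit : (X ^ 2 - C g : ℚ[X]).Splits := by
    rw [hfac]
    exact (Splits.X_sub_C _).mul (Splits.X_sub_C _)
  have htop := (@Polynomial.IsSplittingField.splits_iff ℚ
    (X ^ 2 - C g : ℚ[X]).SplittingField _ _ _ (X ^ 2 - C g : ℚ[X])
    (IsSplittingField.splittingField _)).mp hsplit
  exact Subalgebra.bot_eq_top_iff_finrank_eq_one.mp htop.symm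

private lemma tprod_pos_aux (g : ℚ) (hg : g ≠ 0) (h t : ℕ) (hh : 0 < h)
    (hirr : ∀ p : ℕ, p.Prime → ¬ p ∣ 2 * h → Irreducible (X ^ p - C g : ℚ[X]))
    (h2 : ¬ (2:ℕ) ∣ t → 2 ≤ FpDeg g 2) :
    0 < ∏' p : Nat.Primes, (if (p : ℕ) ∣ t then 1 else 1 - 1 / (FpDeg g (p : ℕ) : ℝ)) := by
  set f : Nat.Primes → ℝ :=
    fun p => if (p : ℕ) ∣ t then 1 else 1 - 1 / (FpDeg g (p : ℕ) : ℝ) with hf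
  have hd2 : ∀ p : Nat.Primes, ¬ (p:ℕ) ∣ t → 2 ≤ FpDeg g (p:ℕ) := by
    intro p hpt
    rcases eq_or_ne (p:ℕ) 2 with h2' | hne
    · rw [h2']; exact h2 (h2' ▸ hpt)
    · have hp := p.2
      have h3 : 2 < (p:ℕ) := lt_of_le_of_ne hp.two_le (Ne.symm hne)
      have hdvd := sub_one_dvd_FpDeg hg hp
      calc 2 ≤ (p:ℕ) - 1 := by omega
      _ ≤ FpDeg g (p:ℕ) := Nat.le_of_dvd (FpDeg_pos g (p:ℕ)) hdvd
  have hhalf : ∀ p : Nat.Primes, 1/2 ≤ f p ∧ f p ≤ 1 := by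
    intro p
    by_cases hpt : (p:ℕ) ∣ t
    · constructor <;> simp [hf, hpt] <;> norm_num
    · have hd := hd2 p hpt
      have hdpos : (0:ℝ) < (FpDeg g (p:ℕ) : ℝ) := by
        exact_mod_cast FpDeg_pos g (p:ℕ)
      have hd2' : (2:ℝ) ≤ (FpDeg g (p:ℕ) : ℝ) := by exact_mod_cast hd
      have hx1 : 1 / (FpDeg g (p:ℕ) : ℝ) ≤ 1/2 := by
        apply one_div_le_one_div_of_le
        · norm_num
        · exact hd2'
      have hx0 : 0 < 1 / (FpDeg g (p:ℕ) : ℝ) := by positivity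
      simp only [hf, if_neg hpt]
      constructor <;> linarith
  have hpos : ∀ p, 0 < f p := fun p => lt_of_lt_of_le (by norm_num) (hhalf p).1
  set S : Set Nat.Primes := {p | (p:ℕ) ∣ 2 * h} with hS
  have hSfin : S.Finite := by
    apply Set.Finite.subset (Set.Finite.preimage
      (Set.injOn_of_injective Nat.Primes.coe_nat_injective) (Set.finite_Iic (2 * h)))
    intro p hp
    exact Nat.le_of_dvd (by omega) hp
  set B : Nat.Primes → ℝ :=
    fun p => S.indicator (fun _ => Real.log 2) p + 4 / ((p:ℕ) : ℝ) ^ 2 with hB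
  have hBsum : Summable B := by
    apply Summable.add
    · exact summable_of_finite_support (hSfin.subset Set.support_indicator_subset)
    · have h0 : Summable (fun n : ℕ => 4 * (1 / (n:ℝ) ^ 2)) :=
        ((Real.summable_one_div_nat_pow (p := 2)).mpr one_lt_two).mul_left 4
      have h1 := h0.comp_injective Nat.Primes.coe_nat_injective
      apply h1.congr
      intro p
      simp [Function.comp, div_eq_mul_inv]
  have hlog : ∀ p, |Real.log (f p)| ≤ B p := by
    intro p
    have hBnn : (0:ℝ) ≤ 4 / ((p:ℕ) : ℝ) ^ 2 := by positivity
    have hInn : 0 ≤ S.indicator (fun _ => Real.log 2) p :=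
      Set.indicator_nonneg (fun _ _ => Real.log_nonneg one_le_two) p
    by_cases hpt : (p:ℕ) ∣ t
    · have : f p = 1 := by simp [hf, hpt]
      rw [this, Real.log_one, abs_zero, hB]
      exact add_nonneg hInn hBnn
    · have h12 := (hhalf p).1
      have hle1 := (hhalf p).2
      have hfp := hpos p
      have habs : |Real.log (f p)| = Real.log (f p)⁻¹ := by
        rw [abs_of_nonpos (Real.log_nonpos (le_of_lt hfp) hle1), Real.log_inv]
      by_cases hpS : p ∈ S
      · have hinv : (f p)⁻¹ ≤ 2 := by
          rw [inv_le_comm₀ hfp (by norm_num)]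
          linarith
        have hlog2 : Real.log (f p)⁻¹ ≤ Real.log 2 :=
          Real.log_le_log (by positivity) hinv
        rw [habs, hB]
        simp only
        rw [Set.indicator_of_mem hpS]
        linarith
      · have hp := p.2
        have hph : ¬ (p:ℕ) ∣ 2 * h := hpS
        have hpdvd := dvd_FpDeg_of_irreducible hp.pos.ne' (hirr (p:ℕ) hp hph)
        have hp1dvd := sub_one_dvd_FpDeg hg hp
        have hcop : Nat.Coprime (p:ℕ) ((p:ℕ) - 1) :=
          (Nat.coprime_self_sub_right hp.one_lt.le).mpr (Nat.coprime_one_right _)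
        have hmul : (p:ℕ) * ((p:ℕ) - 1) ∣ FpDeg g (p:ℕ) :=
          hcop.mul_dvd_of_dvd_of_dvd hpdvd hp1dvd
        have hdge : (p:ℕ) * ((p:ℕ) - 1) ≤ FpDeg g (p:ℕ) :=
          Nat.le_of_dvd (FpDeg_pos g (p:ℕ)) hmul
        have hp2 : 2 ≤ (p:ℕ) := hp.two_le
        have hcast : ((p:ℕ):ℝ) * (((p:ℕ):ℝ) - 1) ≤ (FpDeg g (p:ℕ) : ℝ) := by
          have h' : (((p:ℕ) * ((p:ℕ) - 1) : ℕ) : ℝ) ≤ ((FpDeg g (p:ℕ) : ℕ) : ℝ) := by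
            exact_mod_cast hdge
          rwa [Nat.cast_mul, Nat.cast_sub (by omega), Nat.cast_one] at h'
        have hpR : (2:ℝ) ≤ ((p:ℕ):ℝ) := by exact_mod_cast hp2
        have hpsq : ((p:ℕ):ℝ) ^ 2 ≤ 2 * (FpDeg g (p:ℕ) : ℝ) := by nlinarith
        have hdpos : (0:ℝ) < (FpDeg g (p:ℕ) : ℝ) := by
          exact_mod_cast FpDeg_pos g (p:ℕ)
        set x : ℝ := 1 / (FpDeg g (p:ℕ) : ℝ) with hx
        have hfp_eq : f p = 1 - x := by simp only [hf, if_neg hpt, hx]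
        have hxpos : 0 < x := by positivity
        have hd2' : (2:ℝ) ≤ (FpDeg g (p:ℕ) : ℝ) := by exact_mod_cast hd2 p hpt
        have hxle : x ≤ 1/2 := by
          rw [hx]
          exact one_div_le_one_div_of_le (by norm_num) hd2'
        have hlog1 : Real.log (f p)⁻¹ ≤ (f p)⁻¹ - 1 :=
          Real.log_le_sub_one_of_pos (inv_pos.mpr hfp)
        have h1x : (1:ℝ) - x ≠ 0 := by
          have : x ≤ 1/2 := by
            rw [hx]
            exact one_div_le_one_div_of_le (by norm_num) hd2'
          linarith
        have hfpinv : (f p)⁻¹ - 1 = x / (1 - x) := by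
          rw [hfp_eq, eq_div_iff h1x, sub_mul, inv_mul_cancel₀ h1x]
          ring
        have hdiv : x / (1 - x) ≤ 2 * x := by
          rw [div_le_iff₀ (by linarith)]
          nlinarith
        have h4 : 2 * x ≤ 4 / ((p:ℕ):ℝ) ^ 2 := by
          rw [hx, mul_one_div, div_le_div_iff₀ hdpos (by positivity)]
          nlinarith
        rw [habs, hB]
        simp only
        rw [Set.indicator_of_notMem hpS]
        linarith
  have habsum : Summable (fun p => |Real.log (f p)|) :=
    Summable.of_nonneg_of_le (fun p => abs_nonneg _) hlog hBsum
  have hsum : Summable (fun p => Real.log (f p)) := habsum.of_abs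
  have hprod : HasProd f (Real.exp (∑' p, Real.log (f p))) := by
    have h1 := hsum.hasSum.rexp
    have h2 : (Real.exp ∘ fun p => Real.log (f p)) = f :=
      funext fun p => Real.exp_log (hpos p)
    rwa [h2] at h1
  rw [hprod.tprod_eq]
  exact Real.exp_pos _

end Aux

/-- `A(g,t) = 0` if and only if `g > 0`, `h` is even and `t` is odd. -/
theorem Agt_eq_zero_iff (g : ℚ) (hg : g ≠ -1 ∧ g ≠ 0 ∧ g ≠ 1)
    (g0 : ℚ) (h : ℕ) (hg0pos : 0 < g0) (hh : 1 ≤ h) (hnp : NotExactPower g0)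
    (hrep : g = g0 ^ h ∨ g = -(g0 ^ h))
    (t : ℕ) (ht : 0 < t) :
    Agt g h t = 0 ↔ 0 < g ∧ 2 ∣ h ∧ ¬ 2 ∣ t := by
  obtain ⟨hgm1, hg0', hg1⟩ := hg
  have hg0ne : g0 ≠ 0 := ne_of_gt hg0pos
  unfold Agt
  have hC : (0:ℝ) < (Nat.gcd t h : ℝ) / (t : ℝ) ^ 2 := by
    have h1 : 0 < Nat.gcd t h := Nat.gcd_pos_of_pos_left h ht
    have h2 : (0:ℝ) < (t:ℝ) := by exact_mod_cast ht
    have h3 : (0:ℝ) < (Nat.gcd t h : ℝ) := by exact_mod_cast h1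
    positivity
  have hM : (0:ℝ) < ∏ p ∈ t.primeFactors,
      (if ordProj[p] h ∣ ordProj[p] t then 1 + 1 / (p : ℝ) else 1) := by
    apply Finset.prod_pos
    intro p hp
    have hppos : 0 < p := (Nat.prime_of_mem_primeFactors hp).pos
    have : (0:ℝ) < (p:ℝ) := by exact_mod_cast hppos
    split <;> positivity
  have hCM : ((Nat.gcd t h : ℝ) / (t : ℝ) ^ 2) * ∏ p ∈ t.primeFactors,
      (if ordProj[p] h ∣ ordProj[p] t then 1 + 1 / (p : ℝ) else 1) ≠ 0 :=
    (mul_pos hC hM).ne'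
  rw [mul_eq_zero, or_iff_right hCM]
  constructor
  · intro hP0
    by_contra hcon
    have hirr' : ∀ p : ℕ, p.Prime → ¬ p ∣ 2 * h → Irreducible (X ^ p - C g : ℚ[X]) := by
      intro p hp hpdvd
      have hp2 : p ≠ 2 := by
        intro e
        exact hpdvd (e ▸ Dvd.intro h rfl)
      have hph : ¬ p ∣ h := fun hd => hpdvd (hd.mul_left 2)
      have hodd : Odd p := hp.odd_of_ne_two hp2
      apply X_pow_sub_C_irreducible_of_prime hp
      intro b hb
      have hco : Nat.Coprime p h := (Nat.Prime.coprime_iff_not_dvd hp).mpr hph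
      rcases hrep with hgr | hgr
      · exact notpow_aux hg0pos hnp hp.two_le hco b (by rw [hb, hgr])
      · have hb' : (-b) ^ p = g0 ^ h := by
          rw [hodd.neg_pow, hb, hgr, neg_neg]
        exact notpow_aux hg0pos hnp hp.two_le hco (-b) hb'
    have h2deg : ¬ (2:ℕ) ∣ t → 2 ≤ FpDeg g 2 := by
      intro h2t
      have hnsq : ∀ b : ℚ, b ^ 2 ≠ g := by
        intro b hb
        have hbne : b ≠ 0 := by
          intro e
          rw [e] at hb
          norm_num at hb
          exact hg0' hb.symm
        have hgpos : 0 < g := by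
          rw [← hb]
          positivity
        have hgeq : g = g0 ^ h := by
          rcases hrep with hgr | hgr
          · exact hgr
          · exfalso
            have hpp : (0:ℚ) < g0 ^ h := pow_pos hg0pos h
            rw [hgr] at hgpos
            linarith
        have hh2 : ¬ 2 ∣ h := fun h2h => hcon ⟨hgpos, h2h, h2t⟩
        have hco : Nat.Coprime 2 h := Nat.coprime_two_left.mpr (Nat.odd_iff.mpr (by omega))
        exact notpow_aux hg0pos hnp le_rfl hco b (by rw [hb, hgeq])
      have hdvd := dvd_FpDeg_of_irreducible two_ne_zero
        (X_pow_sub_C_irreducible_of_prime Nat.prime_two hnsq)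
      exact Nat.le_of_dvd (FpDeg_pos g 2) hdvd
    exact absurd hP0 (ne_of_gt (tprod_pos_aux g hg0' h t hh hirr' h2deg))
  · rintro ⟨hgpos, h2h, h2t⟩
    have hgeq : g = g0 ^ h := by
      rcases hrep with hgr | hgr
      · exact hgr
      · exfalso
        have hpp : (0:ℚ) < g0 ^ h := pow_pos hg0pos h
        rw [hgr] at hgpos
        linarith
    obtain ⟨m, hm⟩ := h2h
    have hb : (g0 ^ m) ^ 2 = g := by
      rw [hgeq, hm, ← pow_mul, mul_comm]
    have hdeg1 : FpDeg g 2 = 1 := FpDeg_eq_one_of_sq hb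
    apply tprod_eq_zero'' _ (⟨2, Nat.prime_two⟩ : Nat.Primes)
    simp [h2t, hdeg1]
end
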